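/- Let n = 2p+1 and let Δ denote the radial Laplacian on ℝⁿ acting on spherically symmetric functions, i.e., (Δg)(r) = g''(r) + ((n-1)/r)·g'(r). Then for all i ≥ 0 and r > 0, (I − Δ)ψ_i(r) = 2(p−i)·ψ_{i+1}(r), where ψ_0(r) = e^{-r} and ψ_{i+1}(r) = -(1/r)ψ_i'(r). -/

import Mathlib

/-- ψ₀(r) = e^{-r}, ψ_{i+1}(r) = -(1/r)·ψ_i'(r). -/
noncomputable def psi : ℕ → ℝ → ℝ
  | 0 => fun r => Real.exp (-r)
  | (i+1) => fun r => -(1/r) * deriv (psi i) r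

/-- The radial Laplacian on ℝⁿ, n = 2p+1: (Δg)(r) = g''(r) + ((n-1)/r)·g'(r). -/
noncomputable def radialLaplacian (p : ℕ) (g : ℝ → ℝ) : ℝ → ℝ :=
  fun r => deriv (deriv g) r + ((2 * (p : ℝ) + 1 - 1) / r) * deriv g r

/-!
Since `ψᵢ' = -r ψᵢ₊₁`, the radial Laplacian of `ψᵢ` is `-2p ψᵢ₊₁ - ψᵢ₊₁ + r² ψᵢ₊₂`, so the claim
reduces to the three-term recurrence `r² ψᵢ₊₂ = ψᵢ + (2i+1) ψᵢ₊₁`. That recurrence follows by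
induction on `i`: the case `i = 0` is the derivative of `r ψ₁ = ψ₀`, and differentiating the
identity for `i` and dividing by `-r` gives the one for `i + 1`.
-/

open Set
open scoped ContDiff Topology

theorem HasDerivAt.unique_of_eqOn {𝕜 F : Type*} [NontriviallyNormedField 𝕜] [NormedAddCommGroup F]
    [NormedSpace 𝕜 F] {f g : 𝕜 → F} {f' g' : F} {s : Set 𝕜} {x : 𝕜} (hfg : EqOn f g s)
    (hs : s ∈ 𝓝 x) (hf : HasDerivAt f f' x) (hg : HasDerivAt g g' x) : f' = g' :=
  hf.unique (hg.congr_of_eventuallyEq (hfg.eventuallyEq_of_mem hs))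

theorem contDiffOn_psi (i : ℕ) : ContDiffOn ℝ ∞ (psi i) (Ioi 0) := by
  induction i with
  | zero => exact (Real.contDiff_exp.comp contDiff_neg).contDiffOn
  | succ i ih =>
    have h_inv : ContDiffOn ℝ ∞ (fun r : ℝ => -(1 / r)) (Ioi 0) :=
      (contDiffOn_const.div contDiffOn_id fun r hr => (mem_Ioi.mp hr).ne').neg
    exact h_inv.mul (ih.deriv_of_isOpen isOpen_Ioi le_rfl)

theorem hasDerivAt_psi (i : ℕ) {r : ℝ} (hr : 0 < r) :
    HasDerivAt (psi i) (-(r * psi (i + 1) r)) r := by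
  have hdiff : DifferentiableAt ℝ (psi i) r :=
    ((contDiffOn_psi i).contDiffAt (Ioi_mem_nhds hr)).differentiableAt (by simp)
  have h_val : -(r * psi (i + 1) r) = deriv (psi i) r := by
    show -(r * (-(1 / r) * deriv (psi i) r)) = _
    field_simp
  exact h_val ▸ hdiff.hasDerivAt

theorem hasDerivAt_deriv_psi (i : ℕ) {r : ℝ} (hr : 0 < r) :
    HasDerivAt (deriv (psi i)) (-psi (i + 1) r + r ^ 2 * psi (i + 2) r) r := by
  have h_deriv : EqOn (fun s => -(s * psi (i + 1) s)) (deriv (psi i)) (Ioi 0) :=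
    fun s hs => ((hasDerivAt_psi i hs).deriv).symm
  have h := ((hasDerivAt_id' r).fun_mul (hasDerivAt_psi (i + 1) hr)).fun_neg
  refine (h.congr_of_eventuallyEq (h_deriv.symm.eventuallyEq_of_mem (Ioi_mem_nhds hr))).congr_deriv
    ?_
  ring

theorem sq_mul_psi_add_two (i : ℕ) {r : ℝ} (hr : 0 < r) :
    r ^ 2 * psi (i + 2) r = psi i r + (2 * i + 1) * psi (i + 1) r := by
  induction i generalizing r with
  | zero =>
    have h_psi_one : EqOn (fun s => s * psi 1 s) (psi 0) (Ioi 0) := fun s hs => by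
      have h := (hasDerivAt_psi 0 hs).unique ((hasDerivAt_neg s).exp)
      show s * psi 1 s = Real.exp (-s)
      linarith
    have h := ((hasDerivAt_id r).mul (hasDerivAt_psi 1 hr)).unique_of_eqOn h_psi_one (Ioi_mem_nhds hr)
      (hasDerivAt_psi 0 hr)
    simp only [id] at h
    linear_combination -h + h_psi_one hr
  | succ i ih =>
    have h := ((hasDerivAt_pow 2 r).mul (hasDerivAt_psi (i + 2) hr)).unique_of_eqOn
      (fun s hs => ih hs) (Ioi_mem_nhds hr)
      ((hasDerivAt_psi i hr).add ((hasDerivAt_psi (i + 1) hr).const_mul _))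
    refine mul_left_cancel₀ hr.ne' ?_
    push_cast at h ⊢
    linear_combination -h

theorem one_sub_laplacian_psi (p i : ℕ) (r : ℝ) (hr : 0 < r) :
    psi i r - radialLaplacian p (psi i) r = 2 * ((p : ℝ) - i) * psi (i+1) r := by
  rw [radialLaplacian, (hasDerivAt_deriv_psi i hr).deriv, (hasDerivAt_psi i hr).deriv]
  have h_rec := sq_mul_psi_add_two i hr
  field_simp
  linear_combination -h_rec
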